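/- Let Ω ⊆ ℝ^K be compact convex, φ: Ω → ℝ strictly convex and continuously differentiable, and let (X, Y) be random variables with X in ℝ^d and Y taking values in Ω almost surely. Then for every measurable f: ℝ^d → Ω, E[D_φ(Y, f(X))] ≥ E[D_φ(Y, E[Y|X])]; that is, the conditional expectation E[Y|X] minimizes the expected Bregman divergence loss among all measurable functions of X. -/

import Mathlib

/-! The three-point identity gives
`D(Y, f X) = D(Y, η X) + D(η X, f X) + ⟪∇φ (η X) - ∇φ (f X), Y - η X⟫`.
The first factor of the inner product is a bounded function of `X` and `E[Y - η X | X] = 0`,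
so pulling it out of the conditional expectation shows that the cross term has mean zero,
while `D(η X, f X) ≥ 0` by the first-order characterisation of convexity. -/

open MeasureTheory ProbabilityTheory Real
open scoped ENNReal RealInnerProductSpace

noncomputable section

/-- `ℝ^m` with the Euclidean structure. -/
abbrev Euc (m : ℕ) : Type := EuclideanSpace ℝ (Fin m)

/-- The Bregman divergence `D_φ(x, y) = φ x - φ y - ⟪∇φ y, x - y⟫`. -/
def breg {m : ℕ} (φ : Euc m → ℝ) (x y : Euc m) : ℝ :=
  φ x - φ y - ⟪gradient φ y, x - y⟫

/-- A real random variable `X` is sub-Gaussian with parameter `σ` under `μ`: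
`E[exp (l (X - E X))] ≤ exp (l² σ² / 2)` for all real `l`. -/
def SubGaussianPar {α : Type*} [MeasurableSpace α] (μ : Measure α) (X : α → ℝ) (σ : ℝ) : Prop :=
  ∀ l : ℝ, ∫ a, Real.exp (l * (X a - ∫ a', X a' ∂μ)) ∂μ ≤ Real.exp (l ^ 2 * σ ^ 2 / 2)

/-- A distribution on `ℝ^d` satisfies `c`-isoperimetry: every `L`-Lipschitz real-valued
function of the sample is sub-Gaussian with parameter `L √(c/d)`. -/
def Isoperimetric (c : ℝ) (d : ℕ) (μ : Measure (Euc d)) : Prop :=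
  ∀ (L : ℝ) (f : Euc d → ℝ), 0 ≤ L → LipschitzWith (Real.toNNReal L) f →
    SubGaussianPar μ f (L * Real.sqrt (c / d))

/-- `C` is a universal constant such that the product of a bounded uncorrelated factor
`|Z| ≤ M` with a mean-zero `σ`-sub-Gaussian variable is `C·M·σ`-sub-Gaussian. -/
def MultConstGood (C : ℝ) : Prop :=
  0 < C ∧ ∀ (α : Type) [MeasurableSpace α] (μ : Measure α), IsProbabilityMeasure μ →
    ∀ (X Z : α → ℝ) (σ M : ℝ), Measurable X → Measurable Z →
      SubGaussianPar μ X σ → (∫ a, X a ∂μ) = 0 → (∫ a, Z a * X a ∂μ) = 0 →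
      (∀ᵐ a ∂μ, |Z a| ≤ M) → SubGaussianPar μ (fun a => Z a * X a) (C * M * σ)

lemma ConvexOn.hasFDerivAt_apply_sub_le {E : Type*} [NormedAddCommGroup E] [NormedSpace ℝ E]
    {s : Set E} {f : E → ℝ} {f' : E →L[ℝ] ℝ} {x y : E} (hf : ConvexOn ℝ s f)
    (hx : x ∈ s) (hy : y ∈ s) (hf' : HasFDerivAt f f' y) : f' (x - y) ≤ f x - f y := by
  set ℓ : ℝ →ᵃ[ℝ] E := AffineMap.lineMap y x
  have hline : HasDerivAt (f ∘ ℓ) (f' (x - y)) 0 :=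
    (by simpa [ℓ] using hf' : HasFDerivAt f f' (ℓ 0)).comp_hasDerivAt 0
      AffineMap.hasDerivAt_lineMap
  simpa [slope_def_field, ℓ] using (hf.comp_affineMap ℓ).le_slope_of_hasDerivAt
    (x := 0) (y := 1) (by simpa [ℓ] using hy) (by simpa [ℓ] using hx) zero_lt_one hline

theorem ContDiff.continuous_gradient {F : Type*} [NormedAddCommGroup F] [InnerProductSpace ℝ F]
    [CompleteSpace F] {φ : F → ℝ} (hφ : ContDiff ℝ 1 φ) : Continuous (gradient φ) :=
  (InnerProductSpace.toDual ℝ F).symm.continuous.comp (hφ.continuous_fderiv one_ne_zero)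

theorem integral_inner_sub_eq_zero_of_ae_eq_condExp {Ω E : Type*} {m mΩ : MeasurableSpace Ω}
    {μ : Measure Ω} [NormedAddCommGroup E] [InnerProductSpace ℝ E] [CompleteSpace E]
    (hm : m ≤ mΩ) [SigmaFinite (μ.trim hm)] {g Y Z : Ω → E} {C : ℝ}
    (hg : StronglyMeasurable[m] g) (hgC : ∀ ω, ‖g ω‖ ≤ C) (hY : Integrable Y μ)
    (hZ : Z =ᵐ[μ] μ[Y|m]) :
    ∫ ω, ⟪g ω, Y ω - Z ω⟫ ∂μ = 0 := by
  have hint : ∀ Z : Ω → E, Integrable Z μ → Integrable (fun ω => ⟪g ω, Z ω⟫) μ := fun Z hZ =>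
    (hZ.norm.const_mul C).mono' ((hg.mono hm).aestronglyMeasurable.inner hZ.aestronglyMeasurable)
      (ae_of_all _ fun ω => (norm_inner_le_norm _ _).trans
        (mul_le_mul_of_nonneg_right (hgC ω) (norm_nonneg _)))
  have hpull : μ[fun ω => ⟪g ω, Y ω⟫|m] =ᵐ[μ] fun ω => ⟪g ω, μ[Y|m] ω⟫ :=
    condExp_bilin_of_stronglyMeasurable_left (innerSL ℝ) hg (hint Y hY) hY
  rw [integral_congr_ae (hZ.mono fun ω hω => by rw [hω])]
  simp_rw [inner_sub_right]
  rw [integral_sub (hint Y hY) (hint _ integrable_condExp), ← integral_congr_ae hpull,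
    integral_condExp hm, sub_self]

section Bregman

variable {m : ℕ} {φ : Euc m → ℝ}

theorem breg_nonneg {Ω : Set (Euc m)} (hφ : ConvexOn ℝ Ω φ) {x y : Euc m}
    (hφy : DifferentiableAt ℝ φ y) (hx : x ∈ Ω) (hy : y ∈ Ω) : 0 ≤ breg φ x y := by
  have h := hφ.hasFDerivAt_apply_sub_le hx hy hφy.hasFDerivAt
  simp only [breg, gradient, InnerProductSpace.toDual_symm_apply]
  linarith

theorem breg_three_point (x y z : Euc m) :
    breg φ x z = breg φ x y + breg φ y z + ⟪gradient φ y - gradient φ z, x - y⟫ := by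
  simp only [breg, inner_sub_left, inner_sub_right]
  ring

theorem ContDiff.continuous_breg (hφ : ContDiff ℝ 1 φ) :
    Continuous fun p : Euc m × Euc m => breg φ p.1 p.2 := by
  have := hφ.continuous_gradient
  unfold breg
  fun_prop

theorem integrable_breg_comp {α : Type*} [MeasurableSpace α] {μ : Measure α} [IsFiniteMeasure μ]
    {Ω : Set (Euc m)} (hΩ : IsCompact Ω) (hφ : ContDiff ℝ 1 φ) {U V : α → Euc m}
    (hU : AEStronglyMeasurable U μ) (hV : AEStronglyMeasurable V μ)
    (hUΩ : ∀ᵐ a ∂μ, U a ∈ Ω) (hVΩ : ∀ᵐ a ∂μ, V a ∈ Ω) :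
    Integrable (fun a => breg φ (U a) (V a)) μ := by
  obtain ⟨C, hC⟩ := (hΩ.prod hΩ).exists_bound_of_continuousOn hφ.continuous_breg.continuousOn
  refine .of_bound (hφ.continuous_breg.comp_aestronglyMeasurable (hU.prodMk hV)) C ?_
  filter_upwards [hUΩ, hVΩ] with a hu hv using hC (U a, V a) ⟨hu, hv⟩

theorem integral_breg_three_point {α : Type*} [MeasurableSpace α] {μ : Measure α}
    [IsFiniteMeasure μ] {Ω : Set (Euc m)} (hΩ : IsCompact Ω) (hφ : ContDiff ℝ 1 φ)
    {U V W : α → Euc m} (hU : AEStronglyMeasurable U μ) (hV : AEStronglyMeasurable V μ)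
    (hW : AEStronglyMeasurable W μ) (hUΩ : ∀ᵐ a ∂μ, U a ∈ Ω) (hVΩ : ∀ᵐ a ∂μ, V a ∈ Ω)
    (hWΩ : ∀ᵐ a ∂μ, W a ∈ Ω) :
    ∫ a, breg φ (U a) (W a) ∂μ = ∫ a, breg φ (U a) (V a) ∂μ + ∫ a, breg φ (V a) (W a) ∂μ
      + ∫ a, ⟪gradient φ (V a) - gradient φ (W a), U a - V a⟫ ∂μ := by
  have hUW := integrable_breg_comp hΩ hφ hU hW hUΩ hWΩ
  have hUV := integrable_breg_comp hΩ hφ hU hV hUΩ hVΩ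
  have hVW := integrable_breg_comp hΩ hφ hV hW hVΩ hWΩ
  have hcross : Integrable (fun a => ⟪gradient φ (V a) - gradient φ (W a), U a - V a⟫) μ :=
    ((hUW.sub hUV).sub hVW).congr (ae_of_all _ fun a => by
      simp only [Pi.sub_apply, breg_three_point (φ := φ) (U a) (V a) (W a)]
      ring)
  rw [← integral_add hUV hVW,
    ← integral_add (f := fun a => breg φ (U a) (V a) + breg φ (V a) (W a)) (hUV.add hVW) hcross]
  exact integral_congr_ae (ae_of_all _ fun a => breg_three_point (U a) (V a) (W a))

end Bregman

theorem condexp_minimizes_bregman_general (d K : ℕ) {α : Type*} [MeasurableSpace α]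
    (μ : Measure α) [IsProbabilityMeasure μ]
    (Ω : Set (Euc K)) (hΩc : IsCompact Ω)
    (φ : Euc K → ℝ) (hφ : StrictConvexOn ℝ Ω φ) (hφd : ContDiff ℝ 1 φ)
    (X : α → Euc d) (Y : α → Euc K) (hX : Measurable X) (hY : Measurable Y)
    (hYΩ : ∀ᵐ a ∂μ, Y a ∈ Ω)
    (η : Euc d → Euc K) (hη : Measurable η) (hηΩ : ∀ x, η x ∈ Ω)
    (hver : (fun a => η (X a)) =ᵐ[μ] μ[Y | MeasurableSpace.comap X inferInstance])
    (f : Euc d → Euc K) (hf : Measurable f) (hfΩ : ∀ x, f x ∈ Ω) :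
    ∫ a, breg φ (Y a) (η (X a)) ∂μ ≤ ∫ a, breg φ (Y a) (f (X a)) ∂μ := by
  have hηX : AEStronglyMeasurable (fun a => η (X a)) μ := (hη.comp hX).aestronglyMeasurable
  have hfX : AEStronglyMeasurable (fun a => f (X a)) μ := (hf.comp hX).aestronglyMeasurable
  obtain ⟨R, hR⟩ := isBounded_iff_forall_norm_le.mp hΩc.isBounded
  have hYint : Integrable Y μ := .of_bound hY.aestronglyMeasurable R (hYΩ.mono fun a ha => hR _ ha)
  obtain ⟨C, hC⟩ := hΩc.exists_bound_of_continuousOn hφd.continuous_gradient.continuousOn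
  have hgX := (((hφd.continuous_gradient.measurable.comp hη).sub
    (hφd.continuous_gradient.measurable.comp hf)).comp (comap_measurable X)).stronglyMeasurable
  have hcross : ∫ a, ⟪gradient φ (η (X a)) - gradient φ (f (X a)), Y a - η (X a)⟫ ∂μ = 0 :=
    integral_inner_sub_eq_zero_of_ae_eq_condExp hX.comap_le hgX
      (fun a => (norm_sub_le _ _).trans (add_le_add (hC _ (hηΩ _)) (hC _ (hfΩ _)))) hYint hver
  have hpos : 0 ≤ ∫ a, breg φ (η (X a)) (f (X a)) ∂μ := integral_nonneg fun a =>
    breg_nonneg hφ.convexOn (hφd.differentiable one_ne_zero _) (hηΩ _) (hfΩ _)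
  rw [integral_breg_three_point hΩc hφd hY.aestronglyMeasurable hηX hfX hYΩ
    (ae_of_all _ fun a => hηΩ _) (ae_of_all _ fun a => hfΩ _), hcross, add_zero]
  exact le_add_of_nonneg_right hpos

/-- **The conditional expectation minimizes the expected Bregman loss**
among all measurable predictors of the form `f ∘ X`. -/
theorem condexp_minimizes_bregman (d K : ℕ) {α : Type*} [MeasurableSpace α]
    (μ : Measure α) [IsProbabilityMeasure μ]
    (Ω : Set (Euc K)) (hΩc : IsCompact Ω) (hΩconv : Convex ℝ Ω)
    (φ : Euc K → ℝ) (hφ : StrictConvexOn ℝ Ω φ) (hφd : ContDiff ℝ 1 φ)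
    (X : α → Euc d) (Y : α → Euc K) (hX : Measurable X) (hY : Measurable Y)
    (hYΩ : ∀ᵐ a ∂μ, Y a ∈ Ω)
    (η : Euc d → Euc K) (hη : Measurable η) (hηΩ : ∀ x, η x ∈ Ω)
    (hver : (fun a => η (X a)) =ᵐ[μ] μ[Y | MeasurableSpace.comap X inferInstance])
    (f : Euc d → Euc K) (hf : Measurable f) (hfΩ : ∀ x, f x ∈ Ω) :
    ∫ a, breg φ (Y a) (η (X a)) ∂μ ≤ ∫ a, breg φ (Y a) (f (X a)) ∂μ :=
  condexp_minimizes_bregman_general d K μ Ω hΩc φ hφ hφd X Y hX hY hYΩ η hη hηΩ hver f hf hfΩ
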